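/- arXiv:2311.08140 — 2 statements merged into one kernel-verified Lean document; each statement's English description precedes it below -/
import Mathlib

section
/- For every r ∈ (0,1), both marginals of ν_r coincide and equal (r/c_r) times the uniform distribution on [0,r]: ν_r^x = ν_r^y = (r/c_r)·U(r). -/
/-! The first marginal of `ν_r` is the constant density `c_r⁻¹` on `[0,r]` itself; the second is
its image under `t_r`. The tent map preserves Lebesgue measure on `[0,r]`: each of its two affine
branches, of slope `±2`, maps one half of `[0,r]` onto `[0,r]` and so contributes half of it. -/

open MeasureTheory Set

noncomputable section

/-- The full tent map on `[0,1]`. -/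
def T2 : ℝ → ℝ := fun x => 2 * min x (1 - x)

/-- The rescaled tent map `t_r` on `[0,r]`. -/
def tent (r : ℝ) : ℝ → ℝ := fun x => 2 * min x (r - x)

/-- The normalizing constant `c_r = -log(1-r)`. -/
def cr (r : ℝ) : ℝ := -Real.log (1 - r)

/-- The measure `μ_r`, supported on the diagonal `Δ_r`. -/
def muR (r : ℝ) : Measure (ℝ × ℝ) :=
  ((volume.restrict (Icc (0:ℝ) r)).withDensity
      (fun s => ENNReal.ofReal ((cr r)⁻¹ * (s / (1 - s))))).map (fun s => (s, s))

/-- The measure `ν_r`, supported on the graph `Γ_r` of `t_r`. -/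
def nuR (r : ℝ) : Measure (ℝ × ℝ) :=
  ((volume.restrict (Icc (0:ℝ) r)).withDensity
      (fun _ => ENNReal.ofReal (cr r)⁻¹)).map (fun s => (s, tent r s))

/-- The uniform probability distribution on `[0,r]`. -/
def unif (r : ℝ) : Measure ℝ := (ENNReal.ofReal r)⁻¹ • volume.restrict (Icc (0:ℝ) r)

/-- The family `R`: pairs of nonnegative finite Borel measures on `[0,1]²`
with the marginal balance conditions. -/
structure MemR (μ ν : Measure (ℝ × ℝ)) : Prop where
  fin_mu : μ univ ≠ ⊤
  fin_nu : ν univ ≠ ⊤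
  supp_mu : μ ((Icc (0:ℝ) 1 ×ˢ Icc (0:ℝ) 1)ᶜ) = 0
  supp_nu : ν ((Icc (0:ℝ) 1 ×ˢ Icc (0:ℝ) 1)ᶜ) = 0
  eq_x : ∀ A : Set ℝ, MeasurableSet A →
    ∫⁻ x in A, ENNReal.ofReal (1 - x) ∂(μ.map Prod.fst) =
      ∫⁻ x in A, ENNReal.ofReal x ∂(ν.map Prod.fst)
  eq_y : ∀ B : Set ℝ, MeasurableSet B →
    ∫⁻ y in B, ENNReal.ofReal (1 - y) ∂(μ.map Prod.snd) =
      ∫⁻ y in B, ENNReal.ofReal y ∂(ν.map Prod.snd)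

/-- A coherent distribution: a probability measure on `[0,1]²` of the form
`μ + ν` for some `(μ,ν) ∈ R`. -/
def Coherent (m : Measure (ℝ × ℝ)) : Prop :=
  IsProbabilityMeasure m ∧ ∃ μ ν : Measure (ℝ × ℝ), MemR μ ν ∧ m = μ + ν

theorem map_volume_affine {a : ℝ} (ha : a ≠ 0) (b : ℝ) :
    volume.map (fun x => a * x + b) = ENNReal.ofReal |a⁻¹| • volume := by
  have : (fun x : ℝ => a * x + b) = (· + b) ∘ (a * ·) := rfl
  rw [this, ← Measure.map_map (measurable_add_const b) (measurable_const_mul a),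
    Real.map_volume_mul_left ha, Measure.map_smul, map_add_right_eq_self]

theorem map_volume_restrict_preimage_affine {a : ℝ} (ha : a ≠ 0) (b : ℝ) {s : Set ℝ}
    (hs : MeasurableSet s) :
    (volume.restrict ((fun x => a * x + b) ⁻¹' s)).map (fun x => a * x + b) =
      ENNReal.ofReal |a⁻¹| • volume.restrict s := by
  rw [← Measure.restrict_map (by fun_prop) hs, map_volume_affine ha, Measure.restrict_smul]

theorem tent_of_le_half {r x : ℝ} (hx : x ≤ r / 2) : tent r x = 2 * x := by
  simp only [tent, min_eq_left (by linarith : x ≤ r - x)]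

theorem tent_of_half_le {r x : ℝ} (hx : r / 2 ≤ x) : tent r x = -2 * x + 2 * r := by
  simp only [tent, min_eq_right (by linarith : r - x ≤ x)]; ring

theorem measurable_tent (r : ℝ) : Measurable (tent r) := by
  unfold tent; fun_prop

theorem map_tent_volume_restrict {r : ℝ} (hr : 0 ≤ r) :
    (volume.restrict (Icc (0:ℝ) r)).map (tent r) = volume.restrict (Icc (0:ℝ) r) := by
  have hsplit : volume.restrict (Icc (0:ℝ) r) =
      volume.restrict (Icc 0 (r / 2)) + volume.restrict (Icc (r / 2) r) := by
    rw [← Icc_union_Ioc_eq_Icc (b := r / 2) (by linarith) (by linarith),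
      Measure.restrict_union ((Iic_disjoint_Ioc le_rfl).mono_left Icc_subset_Iic_self)
        measurableSet_Ioc,
      Measure.restrict_congr_set Ioc_ae_eq_Icc]
  have hleft : (volume.restrict (Icc 0 (r / 2))).map (tent r) =
      ENNReal.ofReal 2⁻¹ • volume.restrict (Icc (0:ℝ) r) := by
    have hpre : (fun x : ℝ => 2 * x + 0) ⁻¹' Icc 0 r = Icc 0 (r / 2) := by
      ext x; simp only [mem_preimage, mem_Icc]; constructor <;> intro h <;> constructor <;> linarith
    rw [Measure.map_congr (g := fun x => 2 * x + 0)
      ((ae_restrict_iff' measurableSet_Icc).2 (ae_of_all _ fun x hx => by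
        simp [tent_of_le_half hx.2])), ← hpre,
      map_volume_restrict_preimage_affine two_ne_zero 0 measurableSet_Icc]
    norm_num
  have hright : (volume.restrict (Icc (r / 2) r)).map (tent r) =
      ENNReal.ofReal 2⁻¹ • volume.restrict (Icc (0:ℝ) r) := by
    have hpre : (fun x : ℝ => -2 * x + 2 * r) ⁻¹' Icc 0 r = Icc (r / 2) r := by
      ext x; simp only [mem_preimage, mem_Icc]; constructor <;> intro h <;> constructor <;> linarith
    rw [Measure.map_congr (g := fun x => -2 * x + 2 * r)
      ((ae_restrict_iff' measurableSet_Icc).2 (ae_of_all _ fun x hx => tent_of_half_le hx.1)),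
      ← hpre, map_volume_restrict_preimage_affine (by norm_num) _ measurableSet_Icc]
    norm_num
  conv_lhs => rw [hsplit, Measure.map_add _ _ (measurable_tent r), hleft, hright, ← add_smul,
    ← ENNReal.ofReal_add (by norm_num) (by norm_num)]
  norm_num

theorem ofReal_div_smul_unif {r : ℝ} (hr : 0 < r) (c : ℝ) :
    ENNReal.ofReal (r / c) • unif r = ENNReal.ofReal c⁻¹ • volume.restrict (Icc (0:ℝ) r) := by
  rw [unif, smul_smul, div_eq_mul_inv, ENNReal.ofReal_mul hr.le, mul_comm (ENNReal.ofReal r),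
    mul_assoc, ENNReal.mul_inv_cancel (by simpa using hr) ENNReal.ofReal_ne_top, mul_one]

/-- both marginals of `ν_r` equal `(r/c_r)·U(r)`. -/
theorem nuR_marginals (r : ℝ) (hr : r ∈ Ioo (0:ℝ) 1) :
    (nuR r).map Prod.fst = ENNReal.ofReal (r / cr r) • unif r ∧
      (nuR r).map Prod.snd = ENNReal.ofReal (r / cr r) • unif r := by
  have hgraph : Measurable (fun s : ℝ => (s, tent r s)) := measurable_id.prodMk (measurable_tent r)
  rw [ofReal_div_smul_unif hr.1, nuR, withDensity_const, Measure.map_map measurable_fst hgraph,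
    Measure.map_map measurable_snd hgraph]
  refine ⟨Measure.map_id, ?_⟩
  rw [Measure.map_smul]
  exact congrArg _ (map_tent_volume_restrict hr.1.le)
end
end

section
/- For every r ∈ (0,1), the representation (μ_r, ν_r) of the coherent distribution m_r = μ_r + ν_r is unique: if (μ̃, ν̃) ∈ R satisfies m_r = μ̃ + ν̃, then μ̃ = μ_r and ν̃ = ν_r. -/
open MeasureTheory Set

noncomputable section

/-! The balance condition says that `∫_A (1 - x) dμ'ˣ = ∫_A x dν'ˣ`, i.e. the first marginal of
`μ'` is `x · (μ' + ν')ˣ = x · m_rˣ`, which is computed to be `μ_rˣ`; the same holds for the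
second marginals. Since `μ' ≤ m_r` and `μ_r` lives on the diagonal, the part of `μ'` off the
diagonal lies below `ν_r`, hence is carried by the graph of `t_r`; comparing the two marginals
of `μ'` shows that the first marginal `σ` of that part is `t_r`-invariant. The tent map is
ergodic for Lebesgue measure on `[0, r]`, being the factor of the doubling map of `ℝ/2rℤ` under
`θ ↦ ‖θ‖`, so `σ` is a multiple of Lebesgue measure; as `σ ≤ μ_rˣ`, whose density
`s / ((1 - s) c_r)` vanishes at `0`, this forces `σ = 0`. So `μ'` is carried by the diagonal
with marginal `μ_rˣ`, that is `μ' = μ_r`, and then `ν' = ν_r`. -/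

open Filter Topology
open scoped ENNReal

namespace MeasureTheory.Measure

variable {X Y : Type*} [MeasurableSpace X] [MeasurableSpace Y] {f : X → Y}

lemma map_fst_map_graph (hf : Measurable f) (ρ : Measure X) :
    (ρ.map fun x => (x, f x)).map Prod.fst = ρ :=
  (fst_map_prodMk hf).trans map_id'

lemma map_snd_map_graph (ρ : Measure X) : (ρ.map fun x => (x, f x)).map Prod.snd = ρ.map f :=
  snd_map_prodMk measurable_id

lemma map_snd_map_diag (ρ : Measure X) : (ρ.map fun x => (x, x)).map Prod.snd = ρ :=
  (map_snd_map_graph ρ).trans map_id'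

lemma ae_snd_eq_map_graph [MeasurableEq Y] (hf : Measurable f) (ρ : Measure X) :
    ∀ᵐ p ∂ρ.map (fun x => (x, f x)), p.2 = f p.1 :=
  (ae_map_iff (measurable_id'.prodMk hf).aemeasurable
    (measurableSet_eq_fun measurable_snd (hf.comp measurable_fst))).mpr (.of_forall fun _ => rfl)

lemma eq_map_graph (hf : Measurable f) {β : Measure (X × Y)}
    (h : ∀ᵐ p ∂β, p.2 = f p.1) : β = (β.map Prod.fst).map fun x => (x, f x) := by
  rw [map_map (measurable_id'.prodMk hf) measurable_fst]
  conv_lhs => rw [← map_id (μ := β)]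
  exact map_congr (h.mono fun p hp => by simp [← hp])

lemma restrict_le_of_le_add {μ ν₁ ν₂ : Measure X} {s : Set X} (h : μ ≤ ν₁ + ν₂)
    (hs : ν₂ s = 0) : μ.restrict s ≤ ν₁ :=
  calc μ.restrict s ≤ (ν₁ + ν₂).restrict s := restrict_mono subset_rfl h
    _ = ν₁.restrict s := by rw [restrict_add, restrict_eq_zero.mpr hs, add_zero]
    _ ≤ ν₁ := restrict_le_self

end MeasureTheory.Measure

lemma eq_withDensity_add_of_balance {α β : Measure ℝ} (hα : ∀ᵐ x ∂α, x ∈ Icc 0 1)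
    (h : ∀ A, MeasurableSet A →
      ∫⁻ x in A, ENNReal.ofReal (1 - x) ∂α = ∫⁻ x in A, ENNReal.ofReal x ∂β) :
    α = (α + β).withDensity fun x => ENNReal.ofReal x := by
  ext A hA
  have hone : ∀ᵐ x ∂α.restrict A, ENNReal.ofReal x + ENNReal.ofReal (1 - x) = 1 := by
    filter_upwards [ae_restrict_of_ae hα] with x hx
    rw [← ENNReal.ofReal_add hx.1 (by linarith [hx.2]), add_sub_cancel, ENNReal.ofReal_one]
  rw [withDensity_apply _ hA, Measure.restrict_add, lintegral_add_measure, ← h A hA,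
    ← lintegral_add_left (by fun_prop), lintegral_congr_ae hone, setLIntegral_one]

lemma continuous_tent (r : ℝ) : Continuous (tent r) := by
  unfold tent; fun_prop

lemma norm_coe_two_mul_eq_tent {r y : ℝ} (hr : 0 < r) (hy : |y| ≤ r) :
    ‖((2 * y : ℝ) : AddCircle (2 * r))‖ = tent r |y| := by
  have hp : (2 * r : ℝ) ≠ 0 := by positivity
  have norm_coe {x : ℝ} (hx : |x| ≤ r) : ‖(x : AddCircle (2 * r))‖ = |x| := by
    rw [AddCircle.norm_coe_eq_abs_iff _ hp, abs_of_pos (by positivity : 0 < 2 * r)]; linarith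
  obtain ⟨hy₁, hy₂⟩ := abs_le.mp hy
  rcases le_or_gt |y| (r / 2) with hsmall | hlarge
  · rw [norm_coe (by rw [abs_mul, abs_two]; linarith), abs_mul, abs_two, tent,
      min_eq_left (by linarith)]
  rcases lt_or_ge y 0 with hneg | hpos
  · rw [abs_of_neg hneg] at hlarge ⊢
    rw [← AddCircle.coe_add_period, norm_coe (abs_le.mpr ⟨by linarith, by linarith⟩),
      abs_of_nonneg (by linarith), tent, min_eq_right (by linarith)]
    ring
  · rw [abs_of_nonneg hpos] at hlarge ⊢
    rw [show 2 * y = 2 * y - 2 * r + 2 * r by ring, AddCircle.coe_add_period,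
      norm_coe (abs_le.mpr ⟨by linarith, by linarith⟩), abs_of_nonpos (by linarith), tent,
      min_eq_right (by linarith)]
    ring

lemma norm_two_nsmul_eq_tent {r : ℝ} (hr : 0 < r) (θ : AddCircle (2 * r)) :
    ‖(2 : ℕ) • θ‖ = tent r ‖θ‖ := by
  have : Fact (0 < 2 * r) := ⟨by positivity⟩
  obtain ⟨y, hy, rfl⟩ : ∃ y ∈ Icc (-r) (-r + 2 * r), (y : AddCircle (2 * r)) = θ := by
    rw [← mem_image, AddCircle.coe_image_Icc_eq]; trivial
  have hy' : |y| ≤ r := abs_le.mpr ⟨hy.1, by linarith [hy.2]⟩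
  rw [← AddCircle.coe_nsmul, nsmul_eq_mul, Nat.cast_ofNat, norm_coe_two_mul_eq_tent hr hy',
    (AddCircle.norm_coe_eq_abs_iff _ (by positivity)).mpr
      (by rw [abs_of_pos (by positivity : 0 < 2 * r)]; linarith)]

lemma AddCircle.map_norm_volume {T : ℝ} [Fact (0 < T)] :
    (volume : Measure (AddCircle T)).map (‖·‖) = (2 : ℝ≥0∞) • volume.restrict (Icc 0 (T / 2)) := by
  refine Measure.ext_of_Iic _ _ fun a => ?_
  rw [Measure.map_apply continuous_norm.measurable measurableSet_Iic, Measure.smul_apply,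
    Measure.restrict_apply measurableSet_Iic, smul_eq_mul]
  rcases lt_or_ge a 0 with ha | ha
  · have h₁ : (‖·‖) ⁻¹' Iic a = (∅ : Set (AddCircle T)) :=
      eq_empty_of_forall_notMem fun x hx => (norm_nonneg x).not_gt (lt_of_le_of_lt hx ha)
    have h₂ : Iic a ∩ Icc 0 (T / 2) = ∅ :=
      eq_empty_of_forall_notMem fun x hx => (lt_of_le_of_lt hx.1 ha).not_ge hx.2.1
    simp [h₁, h₂]
  · have h₁ : (‖·‖) ⁻¹' Iic a = Metric.closedBall (0 : AddCircle T) a := by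
      ext x; simp
    rw [h₁, AddCircle.volume_closedBall, ← Ici_inter_Iic, inter_left_comm, Iic_inter_Iic,
      Ici_inter_Iic, Real.volume_Icc, sub_zero,
      ← ENNReal.ofReal_ofNat 2, ← ENNReal.ofReal_mul zero_le_two]
    congr 1
    rw [mul_min_of_nonneg _ _ zero_le_two]; ring_nf; exact min_comm _ _

lemma ergodic_tent {r : ℝ} (hr : 0 < r) : Ergodic (tent r) (volume.restrict (Icc 0 r)) := by
  have : Fact (0 < 2 * r) := ⟨by positivity⟩
  have hnorm : MeasurePreserving (‖·‖) (volume : Measure (AddCircle (2 * r)))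
      ((2 : ℝ≥0∞) • volume.restrict (Icc 0 r)) :=
    ⟨continuous_norm.measurable, by
      rw [AddCircle.map_norm_volume, mul_div_cancel_left₀ r two_ne_zero]⟩
  have := (hnorm.ergodic_of_ergodic_semiconj (AddCircle.ergodic_nsmul one_lt_two)
    (continuous_tent r).measurable (norm_two_nsmul_eq_tent hr)).smul_measure (2 : ℝ≥0∞)⁻¹
  rwa [smul_smul, ENNReal.inv_mul_cancel two_ne_zero ENNReal.ofNat_ne_top, one_smul] at this

def diagMarginal (r : ℝ) : Measure ℝ :=
  (volume.restrict (Icc (0:ℝ) r)).withDensity fun s => ENNReal.ofReal ((cr r)⁻¹ * (s / (1 - s)))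

def graphMarginal (r : ℝ) : Measure ℝ := ENNReal.ofReal (cr r)⁻¹ • volume.restrict (Icc (0:ℝ) r)

section Representation

variable {r : ℝ}

lemma cr_pos (hr : r ∈ Ioo 0 1) : 0 < cr r :=
  neg_pos.mpr (Real.log_neg (by linarith [hr.2]) (by linarith [hr.1]))

lemma muR_eq_map (r : ℝ) : muR r = (diagMarginal r).map fun s => (s, s) := rfl

lemma nuR_eq_map (r : ℝ) : nuR r = (graphMarginal r).map fun s => (s, tent r s) := by
  rw [nuR, withDensity_const, graphMarginal]

lemma muR_compl_diag (r : ℝ) : muR r {p | p.2 = p.1}ᶜ = 0 :=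
  ae_iff.mp (Measure.ae_snd_eq_map_graph measurable_id _)

lemma ae_snd_eq_tent_nuR (r : ℝ) : ∀ᵐ p ∂nuR r, p.2 = tent r p.1 := by
  rw [nuR_eq_map]
  exact Measure.ae_snd_eq_map_graph (continuous_tent r).measurable _

lemma map_fst_muR (r : ℝ) : (muR r).map Prod.fst = diagMarginal r :=
  Measure.map_fst_map_graph measurable_id _

lemma map_snd_muR (r : ℝ) : (muR r).map Prod.snd = diagMarginal r :=
  Measure.map_snd_map_diag _

lemma map_fst_nuR (r : ℝ) : (nuR r).map Prod.fst = graphMarginal r := by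
  rw [nuR_eq_map, Measure.map_fst_map_graph (continuous_tent r).measurable]

lemma map_snd_nuR (hr : 0 < r) : (nuR r).map Prod.snd = graphMarginal r := by
  rw [nuR_eq_map, Measure.map_snd_map_graph, graphMarginal,
    Measure.map_smul, (ergodic_tent hr).map_eq]

lemma isFiniteMeasure_diagMarginal (hr : r < 1) : IsFiniteMeasure (diagMarginal r) := by
  refine isFiniteMeasure_withDensity_ofReal ?_
  refine (ContinuousOn.integrableOn_Icc ?_).hasFiniteIntegral
  exact continuousOn_const.mul (continuousOn_id.div (by fun_prop) fun x hx => by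
    linarith [hx.2])

lemma isFiniteMeasure_muR (hr : r < 1) : IsFiniteMeasure (muR r) := by
  have := isFiniteMeasure_diagMarginal hr
  rw [muR_eq_map]
  infer_instance

lemma withDensity_ofReal_diagMarginal_add_graphMarginal (hr : r ∈ Ioo 0 1) :
    (diagMarginal r + graphMarginal r).withDensity (fun x => ENNReal.ofReal x) =
      diagMarginal r := by
  rw [withDensity_add_measure, diagMarginal, graphMarginal, ← withDensity_const,
    ← withDensity_mul _ (by fun_prop) (by fun_prop),
    ← withDensity_mul _ (by fun_prop) (by fun_prop), ← withDensity_add_left (by fun_prop)]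
  refine withDensity_congr_ae ?_
  filter_upwards [ae_restrict_mem measurableSet_Icc] with x hx
  have h1x : 0 < 1 - x := by linarith [hx.2, hr.2]
  have hc : 0 ≤ (cr r)⁻¹ := inv_nonneg.mpr (cr_pos hr).le
  have hg : 0 ≤ (cr r)⁻¹ * (x / (1 - x)) := mul_nonneg hc (div_nonneg hx.1 h1x.le)
  simp only [Pi.add_apply, Pi.mul_apply]
  rw [← ENNReal.ofReal_mul hg, ← ENNReal.ofReal_mul hc,
    ← ENNReal.ofReal_add (mul_nonneg hg hx.1) (mul_nonneg hc hx.1)]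
  congr 1
  field_simp
  ring

lemma eq_zero_of_smul_le_diagMarginal (hr : r ∈ Ioo 0 1) {c : ℝ≥0∞}
    (h : c • volume.restrict (Icc 0 r) ≤ diagMarginal r) : c = 0 := by
  set g : ℝ → ℝ := fun a => (cr r)⁻¹ * (a / (1 - a))
  have hbound : ∀ a ∈ Ioc 0 r, c ≤ ENNReal.ofReal (g a) := by
    intro a ha
    have hvol : volume.restrict (Icc 0 r) (Icc 0 a) = ENNReal.ofReal a := by
      rw [Measure.restrict_apply measurableSet_Icc,
        inter_eq_left.mpr (Icc_subset_Icc le_rfl ha.2), Real.volume_Icc, sub_zero]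
    have hmono : ∀ x ∈ Icc 0 a, ENNReal.ofReal (g x) ≤ ENNReal.ofReal (g a) := fun x hx => by
      have : 0 < 1 - a := by linarith [ha.2, hr.2]
      have : 0 ≤ (cr r)⁻¹ := inv_nonneg.mpr (cr_pos hr).le
      refine ENNReal.ofReal_le_ofReal ?_
      simp only [g]
      gcongr <;> linarith [hx.1, hx.2]
    refine (ENNReal.mul_le_mul_iff_left (ENNReal.ofReal_pos.mpr ha.1).ne'
      ENNReal.ofReal_ne_top).mp ?_
    calc c * ENNReal.ofReal a = (c • volume.restrict (Icc 0 r)) (Icc 0 a) := by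
          rw [Measure.smul_apply, hvol, smul_eq_mul]
      _ ≤ diagMarginal r (Icc 0 a) := h _
      _ = ∫⁻ x in Icc 0 a, ENNReal.ofReal (g x) ∂volume.restrict (Icc 0 r) :=
          withDensity_apply _ measurableSet_Icc
      _ ≤ ∫⁻ _ in Icc 0 a, ENNReal.ofReal (g a) ∂volume.restrict (Icc 0 r) :=
          setLIntegral_mono measurable_const hmono
      _ = ENNReal.ofReal (g a) * ENNReal.ofReal a := by rw [setLIntegral_const, hvol]
  have hlim : Tendsto (fun a => ENNReal.ofReal (g a)) (𝓝[>] 0) (𝓝 0) := by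
    have : ContinuousAt (fun a => ENNReal.ofReal (g a)) 0 :=
      ENNReal.continuous_ofReal.continuousAt.comp
        (continuousAt_const.mul (continuousAt_id.div (by fun_prop) (by norm_num)))
    simpa [g] using this.tendsto.mono_left nhdsWithin_le_nhds
  exact le_antisymm (ge_of_tendsto hlim (Filter.mem_of_superset (Ioc_mem_nhdsGT hr.1) hbound))
    bot_le

lemma eq_zero_of_map_tent_eq_of_le_diagMarginal (hr : r ∈ Ioo 0 1) {σ : Measure ℝ}
    (hinv : σ.map (tent r) = σ) (hle : σ ≤ diagMarginal r) : σ = 0 := by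
  have := isFiniteMeasure_diagMarginal hr.2
  have := isFiniteMeasure_of_le _ hle
  obtain ⟨c, rfl⟩ := (ergodic_tent hr.1).eq_smul_of_absolutelyContinuous
    ⟨(continuous_tent r).measurable, hinv⟩
    ((Measure.absolutelyContinuous_of_le hle).trans (withDensity_absolutelyContinuous _ _))
  rw [eq_zero_of_smul_le_diagMarginal hr hle, zero_smul]

namespace MemR

variable {μ ν : Measure (ℝ × ℝ)}

lemma ae_mem (h : MemR μ ν) : ∀ᵐ p ∂μ, p ∈ Icc (0:ℝ) 1 ×ˢ Icc (0:ℝ) 1 :=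
  ae_iff.mpr h.supp_mu

lemma map_fst_eq_withDensity (h : MemR μ ν) :
    μ.map Prod.fst = ((μ + ν).map Prod.fst).withDensity fun x => ENNReal.ofReal x := by
  rw [Measure.map_add _ _ measurable_fst]
  exact eq_withDensity_add_of_balance ((ae_map_iff measurable_fst.aemeasurable
    measurableSet_Icc).mpr (h.ae_mem.mono fun _ hp => hp.1)) h.eq_x

lemma map_snd_eq_withDensity (h : MemR μ ν) :
    μ.map Prod.snd = ((μ + ν).map Prod.snd).withDensity fun x => ENNReal.ofReal x := by
  rw [Measure.map_add _ _ measurable_snd]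
  exact eq_withDensity_add_of_balance ((ae_map_iff measurable_snd.aemeasurable
    measurableSet_Icc).mpr (h.ae_mem.mono fun _ hp => hp.2)) h.eq_y

end MemR

lemma eq_muR_of_le_of_marginals (hr : r ∈ Ioo 0 1) {μ : Measure (ℝ × ℝ)}
    (hle : μ ≤ muR r + nuR r) (hfst : μ.map Prod.fst = diagMarginal r)
    (hsnd : μ.map Prod.snd = diagMarginal r) : μ = muR r := by
  set Δ : Set (ℝ × ℝ) := {p | p.2 = p.1}
  have hΔ : MeasurableSet Δ := measurableSet_eq_fun measurable_snd measurable_fst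
  have hmeas_tent := (continuous_tent r).measurable
  set τ := (μ.restrict Δ).map Prod.fst
  set σ := (μ.restrict Δᶜ).map Prod.fst
  have hdiag : μ.restrict Δ = τ.map fun x => (x, x) :=
    Measure.eq_map_graph measurable_id (ae_restrict_mem hΔ)
  have hoff_le : μ.restrict Δᶜ ≤ nuR r :=
    Measure.restrict_le_of_le_add (add_comm (muR r) _ ▸ hle) (muR_compl_diag r)
  have hoff : μ.restrict Δᶜ = σ.map fun x => (x, tent r x) :=
    Measure.eq_map_graph hmeas_tent (ae_mono hoff_le (ae_snd_eq_tent_nuR r))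
  have hsplit : μ = μ.restrict Δ + μ.restrict Δᶜ := (Measure.restrict_add_restrict_compl hΔ).symm
  have hsum : τ + σ = diagMarginal r := by
    rw [← hfst, hsplit, Measure.map_add _ _ measurable_fst]
  have hsum_tent : τ + σ.map (tent r) = diagMarginal r := by
    rw [← hsnd, hsplit, Measure.map_add _ _ measurable_snd, hdiag, hoff,
      Measure.map_snd_map_diag, Measure.map_snd_map_graph]
  have : IsFiniteMeasure τ :=
    have := isFiniteMeasure_diagMarginal hr.2
    isFiniteMeasure_of_le _ (hsum ▸ Measure.le_add_right le_rfl)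
  have hσ : σ = 0 := by
    refine eq_zero_of_map_tent_eq_of_le_diagMarginal hr ?_ (hsum ▸ Measure.le_add_left le_rfl)
    exact (Measure.add_right_inj τ _ _).mp (hsum_tent.trans hsum.symm)
  rw [hsplit, hoff, hdiag, hσ, Measure.map_zero, add_zero, muR_eq_map, ← hsum, hσ, add_zero]

end Representation

/-- the representation `(μ_r, ν_r)` of `m_r` is unique. -/
theorem muR_nuR_unique (r : ℝ) (hr : r ∈ Ioo (0:ℝ) 1)
    (μ' ν' : Measure (ℝ × ℝ)) (h : MemR μ' ν')
    (heq : μ' + ν' = muR r + nuR r) :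
    μ' = muR r ∧ ν' = nuR r := by
  have hfst : μ'.map Prod.fst = diagMarginal r := by
    rw [h.map_fst_eq_withDensity, heq, Measure.map_add _ _ measurable_fst, map_fst_muR,
      map_fst_nuR, withDensity_ofReal_diagMarginal_add_graphMarginal hr]
  have hsnd : μ'.map Prod.snd = diagMarginal r := by
    rw [h.map_snd_eq_withDensity, heq, Measure.map_add _ _ measurable_snd, map_snd_muR,
      map_snd_nuR hr.1, withDensity_ofReal_diagMarginal_add_graphMarginal hr]
  have hμ' : μ' = muR r :=
    eq_muR_of_le_of_marginals hr (heq ▸ Measure.le_add_right le_rfl) hfst hsnd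
  have := isFiniteMeasure_muR hr.2
  refine ⟨hμ', (Measure.add_right_inj (muR r) _ _).mp ?_⟩
  rwa [hμ'] at heq
end
end
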